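/- arXiv:2207.09806 — 3 statements merged into one kernel-verified Lean document; each statement's English description precedes it below -/
import Mathlib

section
/- Let n and k be integers with 1 ≤ k < n, and set s = ⌊(n-1)/k⌋ - 1. If s ≥ 1, then there exists an (s,k)-clash-free permutation of Z_n, i.e., a permutation π of Z_n such that for all distinct i, j ∈ Z_n with ||i,j||_n < s we have ||π(i),π(j)||_n ≥ k. -/
/-- Circular distance on `ZMod n`: the distance between `i` and `j` when the
elements of `ZMod n` are written in a cycle. -/
def circDist (n : ℕ) (i j : ZMod n) : ℕ := min (i - j).val (j - i).val

/-- A permutation `π` of `ZMod n` is `(s,k)`-clash-free if there is no pair of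
distinct elements at circular distance `< s` mapped to a pair at circular
distance `< k`. -/
def IsClashFree (n s k : ℕ) (π : Equiv.Perm (ZMod n)) : Prop :=
  ∀ i j : ZMod n, i ≠ j → circDist n i j < s → k ≤ circDist n (π i) (π j)

/-
Let `a = ⌊(n-1)/k⌋ = s + 1`, `g = gcd(n, a)` and `L = n / g`. Write `v ∈ Z_n` as `v = t L + i`
with `0 ≤ i < L`, `0 ≤ t < g`, and send it to `f(v) = a i - t`. Reducing mod `g` recovers `t`,
and then `a i` mod `n` recovers `i` because `a / g` is coprime to `L`; so `f` is a permutation.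
Moving `v` forward by `δ < k ≤ L` steps crosses at most one block boundary and possibly wraps
around `n`, so `f(v + δ) - f(v) = a δ - q + e g` with `q, e ∈ {0, 1}`. As `g` divides
`n - a k > 0`, we have `a k + g ≤ n`, so this difference lies in `[s, n - s]`. Hence `f` is
`(k, s)`-clash-free and `f⁻¹` is `(s, k)`-clash-free.
-/

section circDist

variable {n : ℕ}

theorem circDist_comm (i j : ZMod n) : circDist n i j = circDist n j i := min_comm _ _

theorem IsClashFree.symm {s k : ℕ} {π : Equiv.Perm (ZMod n)} (h : IsClashFree n s k π) :
    IsClashFree n k s π.symm := by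
  intro i j hij hk
  by_contra! hs
  have := h (π.symm i) (π.symm j) (π.symm.injective.ne hij) hs
  simp only [Equiv.apply_symm_apply] at this
  omega

theorem exists_eq_add_of_circDist_lt [NeZero n] {k : ℕ} {i j : ZMod n} (hij : i ≠ j)
    (h : circDist n i j < k) : ∃ δ : ℕ, 0 < δ ∧ δ < k ∧ (j = i + δ ∨ i = j + δ) := by
  rcases min_lt_iff.mp h with h | h
  · exact ⟨(i - j).val, ZMod.val_pos.mpr (sub_ne_zero.mpr hij), h,
      Or.inr (by rw [ZMod.natCast_zmod_val, add_sub_cancel])⟩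
  · exact ⟨(j - i).val, ZMod.val_pos.mpr (sub_ne_zero.mpr hij.symm), h,
      Or.inl (by rw [ZMod.natCast_zmod_val, add_sub_cancel])⟩

theorem isClashFree_of_forall_add [NeZero n] {s k : ℕ} {π : Equiv.Perm (ZMod n)}
    (h : ∀ (v : ZMod n) (δ : ℕ), 0 < δ → δ < s → k ≤ circDist n (π v) (π (v + δ))) :
    IsClashFree n s k π := by
  intro i j hij hs
  obtain ⟨δ, hδ, hδs, rfl | rfl⟩ := exists_eq_add_of_circDist_lt hij hs
  · exact h i δ hδ hδs
  · rw [circDist_comm]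
    exact h j δ hδ hδs

theorem le_circDist_of_sub_eq [NeZero n] {s D : ℕ} {i j : ZMod n} (h : j - i = D)
    (hsD : s ≤ D) (hDn : D + s ≤ n) : s ≤ circDist n i j := by
  obtain rfl | hs := Nat.eq_zero_or_pos s
  · exact Nat.zero_le _
  have hji : (j - i).val = D := by rw [h, ZMod.val_natCast_of_lt (by omega)]
  have hij : (i - j).val = n - D := by
    rw [← neg_sub, ZMod.neg_val, if_neg (by rw [← ne_eq, ← ZMod.val_pos]; omega), hji]
  unfold circDist
  omega

end circDist

namespace ClashFree

variable {n : ℕ}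

def blockMap (n a L x : ℕ) : ZMod n := a * (x % L : ℕ) - (x / L : ℕ)

section blockMap

variable {a L : ℕ}

theorem blockMap_add_mul_self (hL : 0 < L) (g x : ℕ) :
    blockMap n a L (x + g * L) + g = blockMap n a L x := by
  simp only [blockMap, Nat.add_mul_mod_self_right, Nat.add_mul_div_right _ _ hL]
  push_cast
  ring

theorem exists_blockMap_add (hL : 0 < L) (haL : ((a * L : ℕ) : ZMod n) = 0) (x : ℕ) {δ : ℕ}
    (hδ : δ ≤ L) :
    ∃ q : ℕ, q ≤ 1 ∧ blockMap n a L (x + δ) + q = blockMap n a L x + (a * δ : ℕ) := by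
  set q := (x % L + δ) / L
  have hq : q < 2 := (Nat.div_lt_iff_lt_mul hL).mpr (by have := Nat.mod_lt x hL; omega)
  have hx : x + δ = (x % L + δ) + L * (x / L) := by have := Nat.div_add_mod x L; omega
  have hr : ((L * q + (x % L + δ) % L : ℕ) : ZMod n) = (x % L + δ : ℕ) :=
    congrArg Nat.cast (Nat.div_add_mod _ L)
  refine ⟨q, by omega, ?_⟩
  simp only [blockMap]
  rw [hx, Nat.add_mul_div_left _ _ hL, Nat.add_mul_mod_self_left]
  push_cast at hr haL ⊢
  linear_combination (a : ZMod n) * hr - (q : ZMod n) * haL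

theorem blockMap_injOn (hn : n.gcd a * L = n) : Set.InjOn (blockMap n a L) (Set.Iio n) := by
  intro x hx y hy h
  have hn0 : 0 < n := (Nat.zero_le x).trans_lt hx
  have hg : n.gcd a ∣ n := Nat.gcd_dvd_left n a
  have hL : 0 < L := Nat.pos_of_mul_pos_left (hn ▸ hn0)
  have hdiv : x / L = y / L := by
    have h' := congrArg (ZMod.castHom hg (ZMod (n.gcd a))) h
    have ha : (a : ZMod (n.gcd a)) = 0 :=
      (ZMod.natCast_eq_zero_iff _ _).mpr (Nat.gcd_dvd_right n a)
    simp only [blockMap, map_sub, map_mul, map_natCast, ha, zero_mul, zero_sub, neg_inj,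
      ZMod.natCast_eq_natCast_iff'] at h'
    rwa [Nat.mod_eq_of_lt, Nat.mod_eq_of_lt] at h' <;>
      exact (Nat.div_lt_iff_lt_mul hL).mpr (by rw [hn]; assumption)
  have hmod : x % L = y % L := by
    simp only [blockMap, hdiv, sub_left_inj] at h
    have := ((ZMod.natCast_eq_natCast_iff _ _ _).mp (by exact_mod_cast h)).cancel_left_div_gcd hn0
    rw [Nat.div_eq_of_eq_mul_right (Nat.gcd_pos_of_pos_left a hn0) hn.symm] at this
    exact this.eq_of_lt_of_lt (Nat.mod_lt _ hL) (Nat.mod_lt _ hL)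
  rw [← Nat.div_add_mod x L, ← Nat.div_add_mod y L, hdiv, hmod]

theorem exists_blockMap_val_add [NeZero n] {g : ℕ} (hn : g * L = n) (hga : g ∣ a) (v : ZMod n)
    {δ : ℕ} (hδ : δ < L) : ∃ q e : ℕ, q ≤ 1 ∧ e ≤ 1 ∧
      blockMap n a L (v + δ).val + q = blockMap n a L v.val + (a * δ + e * g : ℕ) := by
  have hg : 0 < g := Nat.pos_of_mul_pos_right (hn ▸ Nat.pos_of_neZero n)
  have hL : 0 < L := Nat.pos_of_mul_pos_left (hn ▸ Nat.pos_of_neZero n)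
  have haL : ((a * L : ℕ) : ZMod n) = 0 := by
    obtain ⟨c, rfl⟩ := hga
    rw [mul_right_comm, hn, Nat.cast_mul, ZMod.natCast_self, zero_mul]
  obtain ⟨q, hq, hstep⟩ := exists_blockMap_add hL haL v.val hδ.le
  have hδval : (δ : ZMod n).val = δ :=
    ZMod.val_natCast_of_lt (hδ.trans_le (hn ▸ Nat.le_mul_of_pos_left L hg))
  by_cases hwrap : v.val + δ < n
  · refine ⟨q, 0, hq, zero_le_one, ?_⟩
    rwa [ZMod.val_add_of_lt (by rwa [hδval]), hδval, zero_mul, add_zero]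
  · have hval : v.val + δ = (v + δ).val + g * L := by
      rw [hn, ← ZMod.val_add_val_of_le (by omega), hδval]
    refine ⟨q, 1, hq, le_rfl, ?_⟩
    have hperiod := blockMap_add_mul_self (n := n) (a := a) hL g (v + δ).val
    rw [← hval] at hperiod
    push_cast at hstep ⊢
    linear_combination hstep - hperiod

end blockMap

noncomputable def blockPerm (n a L : ℕ) [NeZero n] (hn : n.gcd a * L = n) :
    Equiv.Perm (ZMod n) :=
  Equiv.ofBijective (fun v => blockMap n a L v.val) <| Finite.injective_iff_bijective.mp
    fun v w h => ZMod.val_injective n (blockMap_injOn hn (ZMod.val_lt v) (ZMod.val_lt w) h)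

theorem isClashFree_blockPerm [NeZero n] {s k L : ℕ} (hn : n.gcd (s + 1) * L = n) (hkL : k ≤ L)
    (hk : (s + 1) * k + n.gcd (s + 1) ≤ n) : IsClashFree n k s (blockPerm n (s + 1) L hn) := by
  refine isClashFree_of_forall_add fun v δ hδ hδk => ?_
  obtain ⟨q, e, hq, he, hstep⟩ :=
    exists_blockMap_val_add hn (Nat.gcd_dvd_right n (s + 1)) v (hδk.trans_le hkL)
  have hδk_mul : (s + 1) * δ + (s + 1) ≤ (s + 1) * k := by
    rw [← mul_add_one]
    exact Nat.mul_le_mul_left _ hδk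
  have hδ_mul : s + 1 ≤ (s + 1) * δ := Nat.le_mul_of_pos_right _ hδ
  have heg : e * n.gcd (s + 1) ≤ n.gcd (s + 1) := mul_le_of_le_one_left (Nat.zero_le _) he
  refine le_circDist_of_sub_eq (D := (s + 1) * δ + e * n.gcd (s + 1) - q) ?_ (by omega) (by omega)
  rw [Nat.cast_sub (by omega)]
  change blockMap n (s + 1) L (v + δ).val - blockMap n (s + 1) L v.val = _
  linear_combination hstep

end ClashFree

theorem stmt1_general (n k s : ℕ)
    (hs : s = (n - 1) / k - 1) (hs1 : 1 ≤ s) :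
    ∃ π : Equiv.Perm (ZMod n),
      ∀ i j : ZMod n, i ≠ j → circDist n i j < s →
        k ≤ circDist n (π i) (π j) := by
  have ha : (n - 1) / k = s + 1 := by omega
  have hak : (s + 1) * k < n := by
    have hmul := Nat.div_mul_le_self (n - 1) k
    have hle := Nat.div_le_self (n - 1) k
    rw [ha] at hmul hle
    omega
  have : NeZero n := ⟨by omega⟩
  set g := n.gcd (s + 1)
  have hgL : g * (n / g) = n := Nat.mul_div_cancel' (Nat.gcd_dvd_left n (s + 1))
  have hgk : g ≤ n - (s + 1) * k := Nat.le_of_dvd (by omega)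
    (Nat.dvd_sub (Nat.gcd_dvd_left _ _) ((Nat.gcd_dvd_right _ _).mul_right k))
  have hkL : k ≤ n / g := by
    refine (Nat.lt_of_mul_lt_mul_left (a := g) ?_).le
    calc g * k ≤ (s + 1) * k := Nat.mul_le_mul_right k (Nat.gcd_le_right _ s.succ_pos)
      _ < g * (n / g) := by rw [hgL]; exact hak
  exact ⟨(ClashFree.blockPerm n (s + 1) (n / g) hgL).symm,
    (ClashFree.isClashFree_blockPerm hgL hkL (by omega)).symm⟩

theorem stmt1 (n k s : ℕ) (hk : 1 ≤ k) (hkn : k < n)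
    (hs : s = (n - 1) / k - 1) (hs1 : 1 ≤ s) :
    ∃ π : Equiv.Perm (ZMod n),
      ∀ i j : ZMod n, i ≠ j → circDist n i j < s →
        k ≤ circDist n (π i) (π j) :=
  stmt1_general n k s hs hs1
end

section
/- Let n, k and r be integers with 1 < r < k < n, and set s = ⌊(rn-1)/k⌋ - 1. Then k(s+1) + gcd(s+1, n) - 3 < rn - 1. -/
/-- The gcd divides `r * n - k * (m / k)`, which is `m % k + 1`. -/
theorem gcd_div_le_mod_succ {k m n r : ℕ} (hrn : r * n = m + 1) :
    Nat.gcd (m / k) n ≤ m % k + 1 := by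
  have hdiff : r * n - k * (m / k) = m % k + 1 := by
    have := Nat.div_add_mod m k
    omega
  have hdvd : Nat.gcd (m / k) n ∣ m % k + 1 :=
    hdiff ▸ Nat.dvd_sub ((Nat.gcd_dvd_right _ _).mul_left r) ((Nat.gcd_dvd_left _ _).mul_left k)
  exact Nat.le_of_dvd (Nat.succ_pos _) hdvd

theorem stmt13 (n k r s : ℕ) (hr : 1 < r) (hrk : r < k) (hkn : k < n)
    (hs : s = (r * n - 1) / k - 1) :
    k * (s + 1) + Nat.gcd (s + 1) n - 3 < r * n - 1 := by
  have hk : 0 < k := by omega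
  have h2n : 2 * n ≤ r * n := Nat.mul_le_mul_right n hr
  have hkm : k ≤ r * n - 1 := by omega
  have hq : s + 1 = (r * n - 1) / k := by
    have := (Nat.one_le_div_iff hk).mpr hkm
    omega
  have hgcd := gcd_div_le_mod_succ (k := k) (r := r) (n := n) (m := r * n - 1) (by omega)
  have hdecomp := Nat.div_add_mod (r * n - 1) k
  rw [hq]
  omega
end

section
/- Let r, s, k and n be positive integers with r < k < n and s + 1 < n, and let d = gcd(s+1, n) satisfy k(s+1) + d - 3 ≤ rn - 1. Then there exists a permutation π of Z_n that is (k,s,r)-clash-free, i.e., such that there is no subset X ⊆ Z_n of cardinality r+1 with ||X||_n < k and ||π(X)||_n < s. -/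
/-!
Put `m = s + 1`, `d = gcd m n` and `n = d * q`. The permutation lifts a residue to `z ∈ [0, n)`
and sends it to `m * z - ⌊z / q⌋ (mod n)`. The correction `⌊z / q⌋ ∈ [0, d)` is recovered
modulo `d` (as `d ∣ m`), after which `m * z` determines `z` modulo `q`; hence the map is a
permutation. On all of `ℤ` (reducing `z` mod `n` first) it grows by at least `m - 1 = s` per step.

If `X` lies in a cyclic interval of length `< k` and `π X` in one `c + [0, s)`, lift each
`x ∈ X` to an integer `z` in an interval of length `k` and subtract the offset `t < s` of `π x`
from `c`: the growth bound makes the `r + 1` integers `m z - ⌊(z mod n) / q⌋ - t` distinct, they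
are all `≡ c (mod n)`, and they lie in an interval of length `k (s + 1) + d - 3 < r n`, which
contains at most `r` integers of one residue class.
-/

/-- `cyclNorm n X` is the minimum length of a cyclic interval of `ZMod n`
containing `X`: the least `t` such that `X ⊆ x + [0,t] (mod n)` for some `x`. -/
noncomputable def cyclNorm (n : ℕ) (X : Set (ZMod n)) : ℕ :=
  sInf {t : ℕ | ∃ x : ZMod n, ∀ y ∈ X, ∃ i : ℕ, i ≤ t ∧ y = x + (i : ZMod n)}

/-- A permutation `π` of `ZMod n` is `(s,k,r)`-clash-free if there is no
`(r+1)`-subset `X` with `‖X‖ < s` and `‖π(X)‖ < k`. -/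
def IsClashFreeR (n s k r : ℕ) (π : Equiv.Perm (ZMod n)) : Prop :=
  ¬ ∃ X : Finset (ZMod n), X.card = r + 1 ∧
      cyclNorm n (X : Set (ZMod n)) < s ∧
      cyclNorm n (⇑π '' (X : Set (ZMod n))) < k

section Dither

variable {m n : ℕ}

def dither (m n : ℕ) (z : ℤ) : ℤ := z % n / (n / m.gcd n : ℕ)

def ditherMul (m n : ℕ) (z : ℤ) : ℤ := m * z - dither m n z

lemma dither_nonneg [NeZero n] (z : ℤ) : 0 ≤ dither m n z :=
  Int.ediv_nonneg (Int.emod_nonneg _ (by exact_mod_cast NeZero.ne n)) (Int.natCast_nonneg _)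

lemma dither_lt_gcd [NeZero n] (z : ℤ) : dither m n z < m.gcd n := by
  refine Int.ediv_lt_of_lt_mul
    (by exact_mod_cast Nat.div_gcd_pos_of_pos_right m (Nat.pos_of_neZero n)) ?_
  rw [← Nat.cast_mul, Nat.mul_div_cancel' (Nat.gcd_dvd_right m n)]
  exact Int.emod_lt_of_pos z (by exact_mod_cast Nat.pos_of_neZero n)

lemma dither_add_one_le [NeZero n] (z : ℤ) : dither m n (z + 1) ≤ dither m n z + 1 := by
  have hn : (0 : ℤ) < n := by exact_mod_cast Nat.pos_of_neZero n
  have hq : (0 : ℤ) < (n / m.gcd n : ℕ) := by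
    exact_mod_cast Nat.div_gcd_pos_of_pos_right m (Nat.pos_of_neZero n)
  have hz := Int.emod_nonneg z hn.ne'
  rw [dither, dither, ← Int.emod_add_emod]
  rcases (Int.add_one_le_of_lt (Int.emod_lt_of_pos z hn)).lt_or_eq with h | h
  · rw [Int.emod_eq_of_lt (by omega) h]
    calc (z % n + 1) / (n / m.gcd n : ℕ)
        ≤ (z % n + 1 * (n / m.gcd n : ℕ)) / (n / m.gcd n : ℕ) := Int.ediv_le_ediv hq (by omega)
      _ = z % n / (n / m.gcd n : ℕ) + 1 := Int.add_mul_ediv_right _ _ hq.ne'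
  · rw [h, Int.emod_self, Int.zero_ediv]
    linarith [Int.ediv_nonneg hz hq.le]

lemma sub_one_mul_sub_le_ditherMul_sub [NeZero n] {z z' : ℤ} (h : z ≤ z') :
    (m - 1) * (z' - z) ≤ ditherMul m n z' - ditherMul m n z := by
  induction z', h using Int.leInduction with
  | base => simp
  | succ z' _ ih =>
    have := dither_add_one_le (m := m) (n := n) z'
    simp only [ditherMul] at ih ⊢
    linarith

lemma ditherMul_modEq {z z' : ℤ} (h : z ≡ z' [ZMOD n]) :
    ditherMul m n z ≡ ditherMul m n z' [ZMOD n] := by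
  have hd : dither m n z = dither m n z' := by rw [dither, dither, h]
  rw [ditherMul, ditherMul, hd]
  exact (h.mul_left _).sub_right _

lemma eq_of_ditherMul_modEq [NeZero n] {z z' : ℤ} (hz : 0 ≤ z) (hzn : z < n) (hz' : 0 ≤ z')
    (hzn' : z' < n) (h : ditherMul m n z ≡ ditherMul m n z' [ZMOD n]) : z = z' := by
  have hdn : (m.gcd n : ℤ) ∣ n := Int.natCast_dvd_natCast.mpr (Nat.gcd_dvd_right m n)
  have hdm : (m.gcd n : ℤ) ∣ m := Int.natCast_dvd_natCast.mpr (Nat.gcd_dvd_left m n)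
  have hdither_modEq : dither m n z ≡ dither m n z' [ZMOD m.gcd n] := by
    have hmul_zero : ∀ w : ℤ, m * w ≡ 0 [ZMOD m.gcd n] :=
      fun w => Int.modEq_zero_iff_dvd.mpr (dvd_mul_of_dvd_left hdm w)
    have hdither : ∀ w, dither m n w = m * w - ditherMul m n w := fun w => by
      rw [ditherMul]; ring
    rw [hdither, hdither]
    exact ((hmul_zero z).trans (hmul_zero z').symm).sub (h.of_dvd hdn)
  have hdither_eq : dither m n z = dither m n z' := by
    rwa [Int.ModEq, Int.emod_eq_of_lt (dither_nonneg z) (dither_lt_gcd z),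
      Int.emod_eq_of_lt (dither_nonneg z') (dither_lt_gcd z')] at hdither_modEq
  have hmul : (m : ℤ) * z ≡ m * z' [ZMOD n] := by
    simpa [ditherMul, hdither_eq] using h.add_right (dither m n z')
  have hmod : z ≡ z' [ZMOD (n / m.gcd n : ℕ)] := by
    simpa [Int.gcd_comm] using hmul.cancel_left_div_gcd (by exact_mod_cast Nat.pos_of_neZero n)
  have hdiv : z / (n / m.gcd n : ℕ) = z' / (n / m.gcd n : ℕ) := by
    simpa [dither, Int.emod_eq_of_lt, hz, hzn, hz', hzn'] using hdither_eq
  rw [← Int.mul_ediv_add_emod z (n / m.gcd n : ℕ), ← Int.mul_ediv_add_emod z' (n / m.gcd n : ℕ),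
    hdiv, hmod]

lemma injective_ditherMul_val [NeZero n] :
    Function.Injective fun x : ZMod n => (ditherMul m n x.val : ZMod n) := by
  intro x y hxy
  have hlt : ∀ w : ZMod n, (w.val : ℤ) < n := fun w => by exact_mod_cast ZMod.val_lt w
  exact ZMod.val_injective n <| by
    exact_mod_cast eq_of_ditherMul_modEq (Int.natCast_nonneg _) (hlt x) (Int.natCast_nonneg _)
      (hlt y) ((ZMod.intCast_eq_intCast_iff _ _ _).mp hxy)

variable (m n) in
noncomputable def ditherPerm [NeZero n] : Equiv.Perm (ZMod n) :=
  Equiv.ofBijective _ (Finite.injective_iff_bijective.mp (injective_ditherMul_val (m := m)))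

lemma ditherPerm_intCast [NeZero n] (z : ℤ) : ditherPerm m n z = ditherMul m n z :=
  (ZMod.intCast_eq_intCast_iff _ _ _).mpr <|
    ditherMul_modEq (by rw [ZMod.val_intCast]; exact Int.mod_modEq z n)

lemma ditherMul_sub_lt_ditherMul_sub {s : ℕ} [NeZero n] {z z' t t' : ℤ} (hz : z < z')
    (ht : 0 ≤ t) (ht' : t' < s) :
    ditherMul (s + 1) n z - t < ditherMul (s + 1) n z' - t' := by
  have hgap := sub_one_mul_sub_le_ditherMul_sub (m := s + 1) (n := n) hz.le
  have hstep : (s : ℤ) ≤ s * (z' - z) := le_mul_of_one_le_right (by positivity) (by linarith)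
  push_cast at hgap
  linarith

end Dither

lemma card_le_of_subset_Ico_of_intCast_eq {n : ℕ} [NeZero n] {S : Finset ℤ} {a : ℤ} {r : ℕ}
    {c : ZMod n} (hS : S ⊆ Finset.Ico a (a + r * n)) (hc : ∀ x ∈ S, (x : ZMod n) = c) :
    S.card ≤ r := by
  have hn : (0 : ℤ) < n := by exact_mod_cast Nat.pos_of_neZero n
  have hmaps : ∀ x ∈ S, (x - a) / n ∈ Finset.Ico (0 : ℤ) r := fun x hx => by
    obtain ⟨hax, hxa⟩ := Finset.mem_Ico.mp (hS hx)
    exact Finset.mem_Ico.mpr ⟨Int.ediv_nonneg (by linarith) hn.le,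
      Int.ediv_lt_of_lt_mul hn (by linarith)⟩
  have hinj : Set.InjOn (fun x => (x - a) / n) S := fun x hx y hy hxy => by
    have hmod : (x - a) % n = (y - a) % n :=
      ((ZMod.intCast_eq_intCast_iff _ _ _).mp ((hc x hx).trans (hc y hy).symm)).sub_right a
    have := Int.mul_ediv_add_emod (x - a) n
    rw [show (x - a) / n = (y - a) / n from hxy, hmod, Int.mul_ediv_add_emod] at this
    linarith
  simpa using Finset.card_le_card_of_injOn _ hmaps hinj

lemma exists_val_sub_lt_of_cyclNorm_lt {n K : ℕ} [NeZero n] {Y : Set (ZMod n)}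
    (h : cyclNorm n Y < K) : ∃ a : ZMod n, ∀ y ∈ Y, (y - a).val < K := by
  have hne : {t : ℕ | ∃ x : ZMod n, ∀ y ∈ Y, ∃ i : ℕ, i ≤ t ∧ y = x + i}.Nonempty :=
    ⟨n, 0, fun y _ => ⟨y.val, (ZMod.val_lt y).le, by simp⟩⟩
  obtain ⟨a, ha⟩ := Nat.sInf_mem hne
  refine ⟨a, fun y hy => ?_⟩
  obtain ⟨i, hi, rfl⟩ := ha y hy
  rw [add_sub_cancel_left, ZMod.val_natCast]
  exact lt_of_le_of_lt ((Nat.mod_le _ _).trans hi) h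

theorem isClashFreeR_ditherPerm {n r s k : ℕ} [NeZero n]
    (hbound : k * (s + 1) + (s + 1).gcd n ≤ r * n + 2) :
    IsClashFreeR n k s r (ditherPerm (s + 1) n) := by
  rintro ⟨X, hcard, hX, hπX⟩
  obtain ⟨a, ha⟩ := exists_val_sub_lt_of_cyclNorm_lt hX
  obtain ⟨c, hc⟩ := exists_val_sub_lt_of_cyclNorm_lt hπX
  set lift : ZMod n → ℤ := fun x => a.val + (x - a).val
  set offset : ZMod n → ℤ := fun x => (ditherPerm (s + 1) n x - c).val
  set h : ZMod n → ℤ := fun x => ditherMul (s + 1) n (lift x) - offset x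
  have hlift : ∀ x, (lift x : ZMod n) = x := fun x => by simp [lift]
  have hoffset : ∀ x ∈ X, offset x < s := fun x hx => by
    simp only [offset]
    exact_mod_cast hc _ (Set.mem_image_of_mem _ hx)
  have hcast : ∀ y ∈ X.image h, (y : ZMod n) = c := by
    simp [h, offset, ← ditherPerm_intCast, hlift]
  have hinj : Set.InjOn h X := by
    intro x hx y hy hxy
    by_contra hne
    have hlift_ne : lift x ≠ lift y := fun e => hne (by rw [← hlift x, e, hlift])
    rcases hlift_ne.lt_or_gt with hlt | hlt
    · exact (ditherMul_sub_lt_ditherMul_sub hlt (Int.natCast_nonneg _) (hoffset y hy)).ne hxy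
    · exact (ditherMul_sub_lt_ditherMul_sub hlt (Int.natCast_nonneg _) (hoffset x hx)).ne' hxy
  have hIco : X.image h ⊆ Finset.Ico ((s + 1) * a.val - (s + 1).gcd n - s + 2 : ℤ)
      ((s + 1) * a.val - (s + 1).gcd n - s + 2 + r * n) := by
    intro y hy
    obtain ⟨x, hx, rfl⟩ := Finset.mem_image.mp hy
    have hx_lift : ((x - a).val : ℤ) < k := by exact_mod_cast ha x hx
    have hx_dither := dither_lt_gcd (m := s + 1) (n := n) (lift x)
    have hx_dither' := dither_nonneg (m := s + 1) (n := n) (lift x)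
    have hx_offset := hoffset x hx
    have hbound' : (k * (s + 1) + (s + 1).gcd n : ℤ) ≤ r * n + 2 := by exact_mod_cast hbound
    simp only [h, lift, offset, ditherMul, Finset.mem_Ico] at hx_offset ⊢
    push_cast
    constructor <;> nlinarith
  have hcard_le := card_le_of_subset_Ico_of_intCast_eq hIco hcast
  rw [Finset.card_image_of_injOn hinj] at hcard_le
  omega

theorem stmt18_general (r s k n : ℕ) (hr : 0 < r) (hs : 0 < s) (hrk : r < k)
    (hbound : k * (s + 1) + Nat.gcd (s + 1) n - 3 ≤ r * n - 1) :
    ∃ π : Equiv.Perm (ZMod n), IsClashFreeR n k s r π := by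
  have hks : 4 ≤ k * (s + 1) := Nat.mul_le_mul (by omega : 2 ≤ k) (by omega : 2 ≤ s + 1)
  have hbound' : k * (s + 1) + (s + 1).gcd n ≤ r * n + 2 := by omega
  have : NeZero n := ⟨by rintro rfl; rw [mul_zero] at hbound'; omega⟩
  exact ⟨ditherPerm (s + 1) n, isClashFreeR_ditherPerm hbound'⟩

theorem stmt18 (r s k n : ℕ) (hr : 0 < r) (hs : 0 < s) (hrk : r < k) (hkn : k < n)
    (hsn : s + 1 < n)
    (hbound : k * (s + 1) + Nat.gcd (s + 1) n - 3 ≤ r * n - 1) :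
    ∃ π : Equiv.Perm (ZMod n), IsClashFreeR n k s r π :=
  stmt18_general r s k n hr hs hrk hbound
end
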